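/- Let φ, h : ℝ → ℝ be continuous increasing bijections with φ(x) > x for all x ∈ ℝ. Suppose x ∈ ℝ, k ∈ ℤ, h(x) = φ^k(x), and {x_n} is a sequence converging to x with x_n > x for all n, such that h(x_n) = φ^{k_n}(x_n) with k_n > k for all n. Then a contradiction follows; i.e., no such sequence exists. (Concretely: φ^{k_n}(x_n) ≥ φ^{k+1}(x_n) for all n, and φ^{k+1}(x_n) → φ^{k+1}(x) > φ^k(x) = h(x), contradicting continuity of h.) -/

import Mathlib

theorem OrderIso.strictMono_zpow_apply {α : Type*} [Preorder α] (φ : α ≃o α)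
    (hφ : ∀ x, x < φ x) (y : α) : StrictMono fun m : ℤ => (φ ^ m) y :=
  strictMono_int_of_lt_succ fun m => by
    rw [zpow_add_one]
    exact (φ ^ m).strictMono (hφ y)

theorem stmt_2_general (φ h : ℝ ≃o ℝ) (hφ : ∀ x : ℝ, x < φ x)
    (x : ℝ) (k : ℤ) (hx : h x = (φ ^ k) x)
    (xn : ℕ → ℝ) (hlim : Filter.Tendsto xn Filter.atTop (nhds x))
    (kn : ℕ → ℤ) (hkn : ∀ n, h (xn n) = (φ ^ kn n) (xn n))
    (hbig : ∀ n, k < kn n) :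
    False := by
  have hmono := OrderIso.strictMono_zpow_apply φ hφ
  have hle : ∀ n, (φ ^ (k + 1)) (xn n) ≤ h (xn n) := fun n => by
    rw [hkn n]
    exact (hmono _).monotone (hbig n)
  have hlim_le : (φ ^ (k + 1)) x ≤ h x :=
    le_of_tendsto_of_tendsto' (((φ ^ (k + 1)).continuous.tendsto x).comp hlim)
      ((h.continuous.tendsto x).comp hlim) hle
  have hlt : h x < (φ ^ (k + 1)) x := hx ▸ hmono x (lt_add_one k)
  exact hlim_le.not_gt hlt

theorem stmt_2 (φ h : ℝ ≃o ℝ) (hφ : ∀ x : ℝ, x < φ x)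
    (x : ℝ) (k : ℤ) (hx : h x = (φ ^ k) x)
    (xn : ℕ → ℝ) (hlim : Filter.Tendsto xn Filter.atTop (nhds x))
    (hgt : ∀ n, x < xn n)
    (kn : ℕ → ℤ) (hkn : ∀ n, h (xn n) = (φ ^ kn n) (xn n))
    (hbig : ∀ n, k < kn n) :
    False :=
  stmt_2_general φ h hφ x k hx xn hlim kn hkn hbig
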